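/- arXiv:1901.01339 — 6 statements merged into one kernel-verified Lean document; each statement's English description precedes it below -/
import Mathlib

section
/- Let K ⊂ ℂ be a compact set, b a point in a bounded connected component V of ℂ \ K. Then there is no sequence of polynomials Q_n converging uniformly on K to the function z ↦ 1/(z - b). More precisely, if Q is a polynomial with sup_{z ∈ K} |Q(z) - 1/(z-b)| < 1/(2 · max_{z ∈ ∂V} |z - b|), a contradiction follows from the maximum modulus principle. -/
open Filter

/-- If `b` lies in a bounded connected component of the complement of a compact
set `K ⊆ ℂ`, then no sequence of polynomials converges uniformly on `K` to
`z ↦ 1/(z - b)`. -/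
theorem stmt1 (K : Set ℂ) (hK : IsCompact K) (b : ℂ) (hb : b ∈ Kᶜ)
    (hbdd : Bornology.IsBounded (connectedComponentIn Kᶜ b)) :
    ¬ ∃ Q : ℕ → Polynomial ℂ,
        TendstoUniformlyOn (fun n z => (Q n).eval z) (fun z => (z - b)⁻¹) atTop K := by
  rintro ⟨Q, hQ⟩
  set V := connectedComponentIn Kᶜ b with hV
  have hKc : IsOpen Kᶜ := hK.isClosed.isOpen_compl
  have hbV : b ∈ V := mem_connectedComponentIn hb
  have hVopen : IsOpen V := hKc.connectedComponentIn
  -- frontier V ⊆ K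
  have hfr : frontier V ⊆ K := by
    intro x hx
    by_contra hxK
    have hxC : x ∈ Kᶜ := hxK
    have hfr' : frontier V = closure V \ V := hVopen.frontier_eq
    rw [hfr'] at hx
    have hW : IsOpen (connectedComponentIn Kᶜ x) := hKc.connectedComponentIn
    have hxW : x ∈ connectedComponentIn Kᶜ x := mem_connectedComponentIn hxC
    obtain ⟨y, hyW, hyV⟩ := _root_.mem_closure_iff.mp hx.1 _ hW hxW
    have h1 : connectedComponentIn Kᶜ x = connectedComponentIn Kᶜ y :=
      connectedComponentIn_eq hyW
    have h2 : V = connectedComponentIn Kᶜ y := connectedComponentIn_eq hyV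
    have : x ∈ V := by rw [h2, ← h1]; exact hxW
    exact hx.2 this
  -- bound ‖z - b‖ on K
  obtain ⟨C0, hC0⟩ := hK.isBounded.exists_norm_le
  set C : ℝ := max (C0 + ‖b‖) 0 with hCdef
  have hC : ∀ z ∈ K, ‖z - b‖ ≤ C := fun z hz =>
    le_trans (le_trans (norm_sub_le z b) (by linarith [hC0 z hz])) (le_max_left _ _)
  have hC0' : 0 ≤ C := le_max_right _ _
  set ε : ℝ := 1 / (2 * (C + 1)) with hεdef
  have hε : 0 < ε := by positivity
  have := (Metric.tendstoUniformlyOn_iff.mp hQ ε hε)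
  obtain ⟨n, hn⟩ := this.exists
  -- the entire function
  set g : ℂ → ℂ := fun z => (z - b) * (Q n).eval z - 1 with hg
  have hgd : Differentiable ℂ g :=
    ((differentiable_id.sub_const b).mul (Q n).differentiable).sub_const 1
  have hbound : ∀ z ∈ frontier V, ‖g z‖ ≤ 1 / 2 := by
    intro z hz
    have hzK : z ∈ K := hfr hz
    have hzb : z - b ≠ 0 := sub_ne_zero.mpr (fun h => hb (h ▸ hzK))
    have hrw : g z = (z - b) * ((Q n).eval z - (z - b)⁻¹) := by
      field_simp [hg]
      ring
    rw [hrw, norm_mul]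
    have h1 : ‖(Q n).eval z - (z - b)⁻¹‖ ≤ ε := by
      have := hn z hzK
      rw [dist_comm, dist_eq_norm] at this
      exact this.le
    have h2 : ‖z - b‖ ≤ C := hC z hzK
    calc ‖z - b‖ * ‖(Q n).eval z - (z - b)⁻¹‖ ≤ C * ε := by
            exact mul_le_mul h2 h1 (norm_nonneg _) hC0'
      _ ≤ 1 / 2 := by
            rw [hεdef, mul_one_div, div_le_div_iff₀ (by positivity) two_pos]
            nlinarith
  have hmax : ‖g b‖ ≤ 1 / 2 :=
    Complex.norm_le_of_forall_mem_frontier_norm_le hbdd hgd.diffContOnCl hbound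
      (subset_closure hbV)
  have : g b = -1 := by simp [hg]
  rw [this] at hmax
  norm_num at hmax
end

section
/- Let K₁ = {0} ⊂ ℂ and K₂ = {w ∈ ℂ : |w| ≤ 1}, and let f : K₁ × K₂ → ℂ be defined by f(z, w) = |w|. Then f is continuous on K₁ × K₂ (and holomorphic on its empty interior), but f is not the uniform limit on K₁ × K₂ of functions holomorphic on open neighborhoods of K₁ × K₂ in ℂ². -/
/-!
Restricted to the slice `z = 0`, a uniform approximant of `|w|` is holomorphic near the closed
unit disc and is within `ε` of `1` on the unit circle and within `ε` of `0` at the centre. The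
maximum modulus principle applied to `h - 1` forces `1 ≤ 2ε`.
-/

open Metric Complex

theorem exists_half_le_norm_ofReal_norm_sub {h : ℂ → ℂ} (hh : DiffContOnCl ℂ h (ball 0 1)) :
    ∃ w ∈ closedBall (0 : ℂ) 1, 1 / 2 ≤ ‖(‖w‖ : ℂ) - h w‖ := by
  by_contra! happrox
  have hcircle : ∀ z ∈ frontier (ball (0 : ℂ) 1), ‖h z - 1‖ ≤ 1 / 2 := by
    intro z hz
    rw [frontier_ball 0 one_ne_zero, mem_sphere_zero_iff_norm] at hz
    simpa [hz, norm_sub_rev] using (happrox z (by simp [hz])).le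
  have hcentre : ‖h 0 - 1‖ ≤ 1 / 2 :=
    norm_le_of_forall_mem_frontier_norm_le isBounded_ball (hh.sub_const 1) hcircle
      (subset_closure (mem_ball_self one_pos))
  have hzero : ‖h 0‖ < 1 / 2 := by simpa using happrox 0 (by simp)
  have : (1 : ℝ) ≤ ‖h 0‖ + ‖h 0 - 1‖ := by
    simpa using norm_sub_le (h 0) (h 0 - 1)
  linarith

/-- With `K₁ = {0}` and `K₂` the closed unit disc, the function
`f(z,w) = |w|` is continuous on `K₁ × K₂` (which has empty interior in `ℂ²`),
but it is not a uniform limit on `K₁ × K₂` of functions holomorphic on open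
neighbourhoods of `K₁ × K₂`. -/
theorem stmt6 :
    let K : Set (ℂ × ℂ) := {(0 : ℂ)} ×ˢ Metric.closedBall (0 : ℂ) 1
    let f : ℂ × ℂ → ℂ := fun p => (‖p.2‖ : ℂ)
    ContinuousOn f K ∧ interior K = ∅ ∧
      ¬ ∀ ε > (0 : ℝ), ∃ (g : ℂ × ℂ → ℂ) (V : Set (ℂ × ℂ)),
          IsOpen V ∧ K ⊆ V ∧ DifferentiableOn ℂ g V ∧
          ∀ p ∈ K, ‖f p - g p‖ < ε := by
  intro K f
  refine ⟨by fun_prop, by simp [K, interior_prod_eq], fun happrox => ?_⟩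
  obtain ⟨g, V, -, hKV, hg, hgf⟩ := happrox (1 / 2) (by norm_num)
  have hslice : DifferentiableOn ℂ (fun w => g (0, w)) (closure (ball 0 1)) := by
    rw [closure_ball 0 one_ne_zero]
    exact hg.comp (by fun_prop) fun w hw => hKV ⟨rfl, hw⟩
  obtain ⟨w, hw, hfar⟩ := exists_half_le_norm_ofReal_norm_sub hslice.diffContOnCl
  exact (hgf (0, w) ⟨rfl, hw⟩).not_ge hfar
end

section
/- Let K ⊆ ℂ^d be compact, D ⊆ ℂ an open disc, and f : K → ℂ a continuous function such that for every open disc D' ⊆ ℂ and every injective holomorphic map φ : D' → ℂ^d with φ(D') ⊆ K, the composition f ∘ φ is holomorphic. Then for every (not necessarily injective) holomorphic map φ : D → ℂ^d with φ(D) ⊆ K, the composition f ∘ φ is holomorphic on D. -/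
/-!
Away from the zeros of `φ'`, some linear functional of `φ` has nonzero derivative, so `φ` is
injective on small discs and `f ∘ φ` is holomorphic there by hypothesis. The zeros of `φ'` are
isolated unless `φ` is locally constant, and at an isolated zero the continuous function `f ∘ φ`
extends holomorphically by Riemann's removable singularity theorem.
-/

open Set Metric Filter Topology

section RCLike

variable {𝕜 E : Type*} [RCLike 𝕜] [NormedAddCommGroup E] [NormedSpace 𝕜 E]

theorem HasStrictDerivAt.exists_mem_nhds_injOn {φ : 𝕜 → E} {v : E} {z : 𝕜}
    (hφ : HasStrictDerivAt φ v z) (hv : v ≠ 0) : ∃ U ∈ 𝓝 z, InjOn φ U := by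
  obtain ⟨ℓ, -, hℓv⟩ := exists_dual_vector 𝕜 v (norm_ne_zero_iff.2 hv)
  have hℓφ : HasStrictDerivAt (ℓ ∘ φ) (ℓ v) z := ℓ.hasStrictFDerivAt.comp_hasStrictDerivAt z hφ
  have hℓv_ne : ℓ v ≠ 0 := by
    rw [hℓv]
    exact_mod_cast norm_ne_zero_iff.2 hv
  have hequiv := hℓφ.hasStrictFDerivAt_equiv hℓv_ne
  set R := hequiv.toOpenPartialHomeomorph (ℓ ∘ φ)
  have hR : InjOn (ℓ ∘ φ) R.source := R.injOn
  exact ⟨R.source, R.open_source.mem_nhds hequiv.mem_toOpenPartialHomeomorph_source, hR.of_comp⟩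

variable [CompleteSpace E]

theorem AnalyticAt.eventually_eq_or_eventually_deriv_ne_zero {φ : 𝕜 → E} {z₀ : 𝕜}
    (hφ : AnalyticAt 𝕜 φ z₀) :
    (∀ᶠ z in 𝓝 z₀, φ z = φ z₀) ∨ ∀ᶠ z in 𝓝[≠] z₀, deriv φ z ≠ 0 := by
  refine hφ.deriv.eventually_eq_zero_or_eventually_ne_zero.imp (fun hzero => ?_) id
  obtain ⟨ε, hε, hball⟩ :=
    Metric.eventually_nhds_iff_ball.1 (hzero.and hφ.eventually_analyticAt)
  filter_upwards [ball_mem_nhds z₀ hε] with z hz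
  exact isOpen_ball.is_const_of_deriv_eq_zero (convex_ball z₀ ε).isPreconnected
    (fun w hw => (hball w hw).2.differentiableAt.differentiableWithinAt)
    (fun w hw => (hball w hw).1) hz (mem_ball_self hε)

end RCLike

variable {E F : Type*} [NormedAddCommGroup E] [NormedSpace ℂ E] [CompleteSpace E]
  [NormedAddCommGroup F] [NormedSpace ℂ F]

def HolomorphicOnInjectiveDiscs (K : Set E) (f : E → F) : Prop :=
  ∀ (c : ℂ) (r : ℝ), 0 < r → ∀ φ : ℂ → E,
    DifferentiableOn ℂ φ (ball c r) → InjOn φ (ball c r) → MapsTo φ (ball c r) K →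
    DifferentiableOn ℂ (f ∘ φ) (ball c r)

theorem HolomorphicOnInjectiveDiscs.differentiableAt_comp_of_deriv_ne_zero {K : Set E}
    {f : E → F} (hinj : HolomorphicOnInjectiveDiscs K f) {U : Set ℂ} (hU : IsOpen U)
    {φ : ℂ → E} (hφ : DifferentiableOn ℂ φ U) (hmaps : MapsTo φ U K) {z : ℂ} (hz : z ∈ U)
    (hφz : deriv φ z ≠ 0) : DifferentiableAt ℂ (f ∘ φ) z := by
  obtain ⟨V, hV, hinjV⟩ :=
    (hφ.analyticAt (hU.mem_nhds hz)).hasStrictDerivAt.exists_mem_nhds_injOn hφz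
  obtain ⟨δ, hδ, hsub⟩ := Metric.mem_nhds_iff.1 (inter_mem (hU.mem_nhds hz) hV)
  have hsubU : ball z δ ⊆ U := hsub.trans inter_subset_left
  exact (hinj z δ hδ φ (hφ.mono hsubU) (hinjV.mono (hsub.trans inter_subset_right))
    (hmaps.mono_left hsubU)).differentiableAt (ball_mem_nhds z hδ)

theorem HolomorphicOnInjectiveDiscs.differentiableOn_comp [CompleteSpace F] {K : Set E}
    {f : E → F} (hinj : HolomorphicOnInjectiveDiscs K f) (hf : ContinuousOn f K) {U : Set ℂ}
    (hU : IsOpen U) {φ : ℂ → E} (hφ : DifferentiableOn ℂ φ U) (hmaps : MapsTo φ U K) :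
    DifferentiableOn ℂ (f ∘ φ) U := by
  intro z₀ hz₀
  have hU₀ : U ∈ 𝓝 z₀ := hU.mem_nhds hz₀
  refine DifferentiableAt.differentiableWithinAt ?_
  rcases (hφ.analyticAt hU₀).eventually_eq_or_eventually_deriv_ne_zero with hconst | hne
  · exact (differentiableAt_const (f (φ z₀))).congr_of_eventuallyEq
      (hconst.mono fun z hz => congrArg f hz)
  · have hcont : ContinuousAt (f ∘ φ) z₀ := (hf.comp hφ.continuousOn hmaps).continuousAt hU₀
    refine (Complex.analyticAt_of_differentiable_on_punctured_nhds_of_continuousAt ?_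
      hcont).differentiableAt
    filter_upwards [hne, nhdsWithin_le_nhds hU₀] with z hz hzU
    exact hinj.differentiableAt_comp_of_deriv_ne_zero hU hφ hmaps hzU hz

theorem stmt9_general (d : ℕ) (K : Set (Fin d → ℂ))
    (f : (Fin d → ℂ) → ℂ) (hf : ContinuousOn f K)
    (hinj : ∀ (c : ℂ) (r : ℝ), 0 < r → ∀ φ : ℂ → (Fin d → ℂ),
      DifferentiableOn ℂ φ (Metric.ball c r) →
      Set.InjOn φ (Metric.ball c r) →
      Set.MapsTo φ (Metric.ball c r) K →
      DifferentiableOn ℂ (f ∘ φ) (Metric.ball c r)) :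
    ∀ (c : ℂ) (r : ℝ), 0 < r → ∀ φ : ℂ → (Fin d → ℂ),
      DifferentiableOn ℂ φ (Metric.ball c r) →
      Set.MapsTo φ (Metric.ball c r) K →
      DifferentiableOn ℂ (f ∘ φ) (Metric.ball c r) :=
  fun _ _ _ _ hφ hmaps =>
    HolomorphicOnInjectiveDiscs.differentiableOn_comp hinj hf isOpen_ball hφ hmaps

/-- If a continuous `f : K → ℂ` (on a compact `K ⊆ ℂ^d`) composes
holomorphically with every *injective* holomorphic disc contained in `K`,
then it composes holomorphically with every (not necessarily injective)
holomorphic disc contained in `K`. -/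
theorem stmt9 (d : ℕ) (K : Set (Fin d → ℂ)) (hK : IsCompact K)
    (f : (Fin d → ℂ) → ℂ) (hf : ContinuousOn f K)
    (hinj : ∀ (c : ℂ) (r : ℝ), 0 < r → ∀ φ : ℂ → (Fin d → ℂ),
      DifferentiableOn ℂ φ (Metric.ball c r) →
      Set.InjOn φ (Metric.ball c r) →
      Set.MapsTo φ (Metric.ball c r) K →
      DifferentiableOn ℂ (f ∘ φ) (Metric.ball c r)) :
    ∀ (c : ℂ) (r : ℝ), 0 < r → ∀ φ : ℂ → (Fin d → ℂ),
      DifferentiableOn ℂ φ (Metric.ball c r) →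
      Set.MapsTo φ (Metric.ball c r) K →
      DifferentiableOn ℂ (f ∘ φ) (Metric.ball c r) :=
  stmt9_general d K f hf hinj
end

section
/- Let K₁, ..., K_d ⊆ ℂ be compact sets with K_i = closure(interior(K_i)) (regular closed) for each i, and let K = K₁ × ⋯ × K_d. If f : K → ℂ is continuous and holomorphic on the interior of K, then for each i₀ and each choice of points w_i ∈ K_i for i ≠ i₀, the one-variable function z ↦ f(z₁(z), ..., z_d(z)) (with z_{i₀}(z) = z and z_i(z) = w_i) is holomorphic on the interior of K_{i₀}. -/
/-- If each `K i ⊆ ℂ` is regular closed (`closure (interior (K i)) = K i`) and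
`f : K₁ × ⋯ × K_d → ℂ` is continuous and holomorphic on the interior of the
product, then every one-variable slice of `f` (with the other coordinates
fixed at arbitrary points `w i ∈ K i`) is holomorphic on the interior of the
corresponding factor. -/
theorem stmt10 (d : ℕ) (K : Fin d → Set ℂ) (hK : ∀ i, IsCompact (K i))
    (hreg : ∀ i, closure (interior (K i)) = K i)
    (f : (Fin d → ℂ) → ℂ)
    (hcont : ContinuousOn f (Set.univ.pi K))
    (hhol : DifferentiableOn ℂ f (interior (Set.univ.pi K))) :
    ∀ (i₀ : Fin d) (w : Fin d → ℂ), (∀ i, w i ∈ K i) →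
      DifferentiableOn ℂ (fun z : ℂ => f (Function.update w i₀ z))
        (interior (K i₀)) := by
  intro i₀ w hw
  -- interior of the product
  have hintS : interior (Set.univ.pi K) = Set.univ.pi (fun i => interior (K i)) := by
    rw [interior_pi_set Set.finite_univ]
  -- pick sequences of interior points converging to w i
  have hmem : ∀ i, w i ∈ closure (interior (K i)) := by
    intro i
    rw [hreg i]
    exact hw i
  have hseq : ∀ i, ∃ u : ℕ → ℂ, (∀ n, u n ∈ interior (K i)) ∧
      Filter.Tendsto u Filter.atTop (nhds (w i)) := by
    intro i
    exact mem_closure_iff_seq_limit.mp (hmem i)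
  choose u hu htu using hseq
  -- the approximating slice functions
  set F : ℕ → ℂ → ℂ := fun n z => f (Function.update (fun i => u i n) i₀ z) with hF
  -- the update map is differentiable in z
  have hupd : ∀ c : Fin d → ℂ, Differentiable ℂ (fun z : ℂ => Function.update c i₀ z) := by
    intro c
    rw [differentiable_pi]
    intro j
    simp only [Function.update_apply]
    by_cases h : j = i₀ <;> simp [h]
  -- each F n is differentiable on interior (K i₀)
  have hFdiff : ∀ n, DifferentiableOn ℂ (F n) (interior (K i₀)) := by
    intro n
    have hmaps : Set.MapsTo (fun z : ℂ => Function.update (fun i => u i n) i₀ z)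
        (interior (K i₀)) (interior (Set.univ.pi K)) := by
      intro z hz
      rw [hintS]
      intro j _
      rcases eq_or_ne j i₀ with rfl | h
      · simpa using hz
      · simp [Function.update_apply, h, hu j n]
    exact hhol.comp ((hupd _).differentiableOn) hmaps
  -- uniform convergence on interior (K i₀)
  have hSc : IsCompact (Set.univ.pi K) := isCompact_univ_pi hK
  have hucont : UniformContinuousOn f (Set.univ.pi K) :=
    hSc.uniformContinuousOn_of_continuous hcont
  have hunif : TendstoUniformlyOn F (fun z => f (Function.update w i₀ z))
      Filter.atTop (interior (K i₀)) := by
    rw [Metric.tendstoUniformlyOn_iff]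
    intro ε hε
    rcases (Metric.uniformContinuousOn_iff.mp hucont) ε hε with ⟨δ, hδ, hδε⟩
    have hev : ∀ᶠ n in Filter.atTop, ∀ i, dist (u i n) (w i) < δ := by
      rw [Filter.eventually_all]
      intro i
      exact (Metric.tendsto_nhds.mp (htu i)) δ hδ
    filter_upwards [hev] with n hn z hz
    have hzK : z ∈ K i₀ := interior_subset hz
    have ha : Function.update w i₀ z ∈ Set.univ.pi K := by
      intro j _
      rcases eq_or_ne j i₀ with rfl | h
      · simpa using hzK
      · simp [Function.update_apply, h, hw j]
    have hb : Function.update (fun i => u i n) i₀ z ∈ Set.univ.pi K := by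
      intro j _
      rcases eq_or_ne j i₀ with rfl | h
      · simpa using hzK
      · simpa [Function.update_apply, h] using interior_subset (hu j n)
    apply hδε _ ha _ hb
    rcases Nat.eq_zero_or_pos d with rfl | hd
    · exact i₀.elim0
    rw [dist_pi_lt_iff hδ]
    intro j
    rcases eq_or_ne j i₀ with rfl | h
    · simpa using hδ
    · rw [dist_comm]
      simpa [Function.update_apply, h] using hn j
  exact (hunif.tendstoLocallyUniformlyOn.differentiableOn
    (Filter.Eventually.of_forall hFdiff) isOpen_interior)
end

section
/- Let K₁ ⊆ ℂ^m be compact, ω : K₁ → ℂ a continuous function, and K = {(z, ω(z)) : z ∈ K₁} ⊆ ℂ^{m+1} the graph of ω. Suppose every function in A_D(K₁) is a uniform limit on K₁ of functions holomorphic on open neighborhoods of K₁, and ω ∈ A_D(K₁). Then every function in A_D(K) is a uniform limit on K of functions holomorphic on open neighborhoods of K ⊆ ℂ^{m+1}. -/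
/-!
Composing with the graph map `Ψ z = (z, ω z)` sends `A_D(K)` into `A_D(K₁)`: `Ψ` is injective
and its coordinates lie in `A_D(K₁)`, so it carries injective holomorphic discs in `K₁` to
injective holomorphic discs in `K`. Approximating `F ∘ Ψ` on `K₁` by `g` holomorphic near `K₁`,
the function `(z, w) ↦ g z` approximates `F` on `K`, since `F (z, ω z) = (F ∘ Ψ) z`.
-/

/-- `AD S f` means `f` is continuous on `S` and holomorphic along every
injective holomorphic disc contained in `S` (the algebra `A_D(S)`). -/
def AD {n : ℕ} (S : Set (Fin n → ℂ)) (f : (Fin n → ℂ) → ℂ) : Prop :=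
  ContinuousOn f S ∧
    ∀ (c : ℂ) (r : ℝ), 0 < r → ∀ φ : ℂ → (Fin n → ℂ),
      DifferentiableOn ℂ φ (Metric.ball c r) →
      Set.InjOn φ (Metric.ball c r) →
      Set.MapsTo φ (Metric.ball c r) S →
      DifferentiableOn ℂ (f ∘ φ) (Metric.ball c r)

open Set

variable {n k : ℕ} {S : Set (Fin n → ℂ)}

theorem Differentiable.ad {f : (Fin n → ℂ) → ℂ} (hf : Differentiable ℂ f) : AD S f :=
  ⟨hf.continuous.continuousOn, fun _ _ _ _ hφ _ _ => hf.comp_differentiableOn hφ⟩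

theorem AD.comp {T : Set (Fin k → ℂ)} {F : (Fin k → ℂ) → ℂ} {Ψ : (Fin n → ℂ) → Fin k → ℂ}
    (hF : AD T F) (hΨ : ∀ i, AD S fun z => Ψ z i) (hinj : InjOn Ψ S) (hmaps : MapsTo Ψ S T) :
    AD S (F ∘ Ψ) := by
  refine ⟨hF.1.comp (continuousOn_pi.2 fun i => (hΨ i).1) hmaps, ?_⟩
  intro c r hr φ hφ hφinj hφmaps
  have hΨφ : DifferentiableOn ℂ (Ψ ∘ φ) (Metric.ball c r) :=
    differentiableOn_pi.2 fun i => (hΨ i).2 c r hr φ hφ hφinj hφmaps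
  exact hF.2 c r hr (Ψ ∘ φ) hΨφ (hinj.comp hφinj hφmaps) (hmaps.comp hφmaps)

theorem AD.snoc {ω : (Fin n → ℂ) → ℂ} (hω : AD S ω) (i : Fin (n + 1)) :
    AD S fun z => (Fin.snoc z (ω z) : Fin (n + 1) → ℂ) i := by
  induction i using Fin.lastCases with
  | last => simpa only [Fin.snoc_last] using hω
  | cast j => simpa only [Fin.snoc_castSucc] using (differentiable_apply j).ad

theorem injective_snoc_graph (ω : (Fin n → ℂ) → ℂ) :
    Function.Injective fun z => (Fin.snoc z (ω z) : Fin (n + 1) → ℂ) := fun x y hxy => by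
  simpa only [Fin.init_snoc] using congrArg Fin.init hxy

theorem differentiable_init : Differentiable ℂ (Fin.init : (Fin (n + 1) → ℂ) → Fin n → ℂ) :=
  differentiable_pi.2 fun i => differentiable_apply i.castSucc

theorem stmt11_general (m : ℕ) (K₁ : Set (Fin m → ℂ))
    (ω : (Fin m → ℂ) → ℂ) (hω : AD K₁ ω)
    (happrox : ∀ f : (Fin m → ℂ) → ℂ, AD K₁ f → ∀ ε > (0 : ℝ),
      ∃ (g : (Fin m → ℂ) → ℂ) (V : Set (Fin m → ℂ)),
        IsOpen V ∧ K₁ ⊆ V ∧ DifferentiableOn ℂ g V ∧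
        ∀ z ∈ K₁, ‖f z - g z‖ < ε) :
    ∀ F : (Fin (m + 1) → ℂ) → ℂ,
      AD {p : Fin (m + 1) → ℂ | ∃ z ∈ K₁, p = Fin.snoc z (ω z)} F →
      ∀ ε > (0 : ℝ),
        ∃ (G : (Fin (m + 1) → ℂ) → ℂ) (W : Set (Fin (m + 1) → ℂ)),
          IsOpen W ∧ {p : Fin (m + 1) → ℂ | ∃ z ∈ K₁, p = Fin.snoc z (ω z)} ⊆ W ∧
          DifferentiableOn ℂ G W ∧
          ∀ p ∈ {p : Fin (m + 1) → ℂ | ∃ z ∈ K₁, p = Fin.snoc z (ω z)},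
            ‖F p - G p‖ < ε := by
  intro F hF ε hε
  have hFΨ : AD K₁ (F ∘ fun z => Fin.snoc z (ω z)) :=
    hF.comp hω.snoc (injective_snoc_graph ω).injOn fun z hz => ⟨z, hz, rfl⟩
  obtain ⟨g, V, hV, hK₁V, hg, hFg⟩ := happrox _ hFΨ ε hε
  refine ⟨g ∘ Fin.init, Fin.init ⁻¹' V, hV.preimage differentiable_init.continuous, ?_,
    hg.comp differentiable_init.differentiableOn fun _ hp => hp, ?_⟩
  · rintro _ ⟨z, hz, rfl⟩
    simpa only [mem_preimage, Fin.init_snoc] using hK₁V hz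
  · rintro _ ⟨z, hz, rfl⟩
    simpa only [Function.comp_apply, Fin.init_snoc] using hFg z hz

/-- Mergelyan-type theorem on graphs: if every function of `A_D(K₁)` is a
uniform limit on `K₁` of functions holomorphic on neighbourhoods of `K₁`, and
`ω ∈ A_D(K₁)`, then the same approximation property holds for `A_D(K)` where
`K ⊆ ℂ^{m+1}` is the graph of `ω` over `K₁`. -/
theorem stmt11 (m : ℕ) (K₁ : Set (Fin m → ℂ)) (hK₁ : IsCompact K₁)
    (ω : (Fin m → ℂ) → ℂ) (hω : AD K₁ ω)
    (happrox : ∀ f : (Fin m → ℂ) → ℂ, AD K₁ f → ∀ ε > (0 : ℝ),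
      ∃ (g : (Fin m → ℂ) → ℂ) (V : Set (Fin m → ℂ)),
        IsOpen V ∧ K₁ ⊆ V ∧ DifferentiableOn ℂ g V ∧
        ∀ z ∈ K₁, ‖f z - g z‖ < ε) :
    ∀ F : (Fin (m + 1) → ℂ) → ℂ,
      AD {p : Fin (m + 1) → ℂ | ∃ z ∈ K₁, p = Fin.snoc z (ω z)} F →
      ∀ ε > (0 : ℝ),
        ∃ (G : (Fin (m + 1) → ℂ) → ℂ) (W : Set (Fin (m + 1) → ℂ)),
          IsOpen W ∧ {p : Fin (m + 1) → ℂ | ∃ z ∈ K₁, p = Fin.snoc z (ω z)} ⊆ W ∧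
          DifferentiableOn ℂ G W ∧
          ∀ p ∈ {p : Fin (m + 1) → ℂ | ∃ z ∈ K₁, p = Fin.snoc z (ω z)},
            ‖F p - G p‖ < ε :=
  stmt11_general m K₁ ω hω happrox
end

section
/- Let K₁ ⊆ ℂ be a compact set with nonempty interior, ω : K₁ → ℂ continuous, and K = {(z, ω(z)) : z ∈ K₁} ⊆ ℂ² the graph of ω. Then the function f(z, w) = |z| is continuous on K but is not a uniform limit on K of functions holomorphic on open neighborhoods of K in ℂ². -/
/-!
Composing with the holomorphic map `z ↦ (z, ω z)` turns holomorphic approximants of `f` near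
the graph `K` into holomorphic approximants of `|z|` on the interior of `K₁`. A uniform limit of
holomorphic functions is holomorphic, so `|z|` would be holomorphic on a nonempty open set; being
real-valued it would be constant on a ball there by the open mapping theorem, which it is not.
-/

open Metric Filter

theorem not_differentiableOn_ofReal_norm {U : Set ℂ} (hU : IsOpen U) (hne : U.Nonempty) :
    ¬ DifferentiableOn ℂ (fun z : ℂ => (‖z‖ : ℂ)) U := by
  intro h
  obtain ⟨z₀, hz₀⟩ := hne
  obtain ⟨r, hr, hball⟩ := isOpen_iff.mp hU z₀ hz₀
  obtain ⟨c, hc⟩ := ((h.mono hball).analyticOnNhd isOpen_ball).eq_const_of_im_eq_const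
    (c₀ := 0) (fun z _ => Complex.ofReal_im _) isOpen_ball (isConnected_ball hr)
  have hsphere : ball z₀ r ⊆ sphere 0 c.re := fun z hz => by
    simpa using congrArg Complex.re (hc z hz)
  have := interior_mono hsphere
  rw [isOpen_ball.interior_eq, interior_sphere'] at this
  exact (nonempty_ball.2 hr).ne_empty (Set.subset_empty_iff.1 this)

theorem differentiableOn_of_uniformly_approximable {E : Type*} [NormedAddCommGroup E]
    [NormedSpace ℂ E] [CompleteSpace E] {f : ℂ → E} {U : Set ℂ} (hU : IsOpen U)
    (happrox : ∀ ε > (0 : ℝ), ∃ g : ℂ → E, DifferentiableOn ℂ g U ∧ ∀ z ∈ U, ‖f z - g z‖ < ε) :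
    DifferentiableOn ℂ f U := by
  choose g hg hfg using fun n : ℕ => happrox (1 / (n + 1)) Nat.one_div_pos_of_nat
  have hlim : TendstoUniformlyOn g f atTop U := by
    refine tendstoUniformlyOn_iff.2 fun ε hε => ?_
    filter_upwards [(tendsto_order.1 tendsto_one_div_add_atTop_nhds_zero_nat).2 ε hε] with n hn z hz
    exact (dist_eq_norm (f z) (g n z)).trans_lt ((hfg n z hz).trans hn)
  exact hlim.tendstoLocallyUniformlyOn.differentiableOn (Eventually.of_forall hg) hU

theorem stmt12_general (K₁ : Set ℂ) (hint : (interior K₁).Nonempty)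
    (ω : ℂ → ℂ) (hωh : DifferentiableOn ℂ ω (interior K₁)) :
    let K : Set (ℂ × ℂ) := {p : ℂ × ℂ | p.1 ∈ K₁ ∧ p.2 = ω p.1}
    let f : ℂ × ℂ → ℂ := fun p => ((‖p.1‖ : ℝ) : ℂ)
    ContinuousOn f K ∧
      ¬ ∀ ε > (0 : ℝ), ∃ (g : ℂ × ℂ → ℂ) (V : Set (ℂ × ℂ)),
          IsOpen V ∧ K ⊆ V ∧ DifferentiableOn ℂ g V ∧
          ∀ p ∈ K, ‖f p - g p‖ < ε := by
  intro K f
  refine ⟨by fun_prop, fun H => not_differentiableOn_ofReal_norm isOpen_interior hint ?_⟩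
  refine differentiableOn_of_uniformly_approximable isOpen_interior fun ε hε => ?_
  obtain ⟨g, V, -, hKV, hg, hfg⟩ := H ε hε
  have hgraph : ∀ z ∈ interior K₁, (z, ω z) ∈ K := fun z hz => ⟨interior_subset hz, rfl⟩
  refine ⟨fun z => g (z, ω z), ?_, fun z hz => hfg _ (hgraph z hz)⟩
  exact hg.comp (differentiableOn_id.prodMk hωh) fun z hz => hKV (hgraph z hz)

/-- Let `K₁ ⊆ ℂ` be compact with nonempty interior, `ω` continuous on `K₁` and
holomorphic on its interior, and let `K ⊆ ℂ²` be the graph of `ω`. Then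
`f(z,w) = |z|` is continuous on `K`, but it is not a uniform limit on `K` of
functions holomorphic on open neighbourhoods of `K`. -/
theorem stmt12 (K₁ : Set ℂ) (hK₁ : IsCompact K₁) (hint : (interior K₁).Nonempty)
    (ω : ℂ → ℂ) (hωc : ContinuousOn ω K₁) (hωh : DifferentiableOn ℂ ω (interior K₁)) :
    let K : Set (ℂ × ℂ) := {p : ℂ × ℂ | p.1 ∈ K₁ ∧ p.2 = ω p.1}
    let f : ℂ × ℂ → ℂ := fun p => ((‖p.1‖ : ℝ) : ℂ)
    ContinuousOn f K ∧
      ¬ ∀ ε > (0 : ℝ), ∃ (g : ℂ × ℂ → ℂ) (V : Set (ℂ × ℂ)),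
          IsOpen V ∧ K ⊆ V ∧ DifferentiableOn ℂ g V ∧
          ∀ p ∈ K, ‖f p - g p‖ < ε :=
  stmt12_general K₁ hint ω hωh
end
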